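/- Let μ be a finite measure on a set P and r : P → U a measurable map into a separable Hilbert space with ∫ ‖r(p)‖² dμ(p) < ∞. Define R : U → L²(P, μ) by (R u)(p) = ⟨r(p), u⟩. Then R is bounded, and its correlation C = R* R satisfies ⟨C u, w⟩ = ∫ ⟨r(p), u⟩ ⟨r(p), w⟩ dμ(p) for all u, w ∈ U; moreover C is trace class with tr C = ∫ ‖r(p)‖² dμ(p). -/

import Mathlib

open RealInnerProductSpace MeasureTheory

/-!
`R` is `u ↦ ⟪r ·, u⟫`, i.e. `r`, viewed as an element of `L²(μ; U)`, composed pointwise with the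
bounded functional `⟪·, u⟫`; hence `R` is bounded. The identity `⟪R* R u, w⟫ = ⟪R u, R w⟫_{L²}`
gives the integral formula. Summing it over a (necessarily countable) Hilbert basis `(bᵢ)` and
using Parseval, `∑ ⟪r p, bᵢ⟫² = ‖r p‖²`, the nonnegative series may be integrated termwise.
-/

section
variable {𝕜 E ι : Type*} [RCLike 𝕜] [NormedAddCommGroup E] [InnerProductSpace 𝕜 E] {v : ι → E}

theorem Orthonormal.norm_sub_sq (hv : Orthonormal 𝕜 v) {i j : ι} (hij : i ≠ j) :
    ‖v i - v j‖ ^ 2 = 2 := by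
  rw [@_root_.norm_sub_sq 𝕜, hv.inner_eq_zero hij, hv.norm_eq_one, hv.norm_eq_one]
  norm_num

theorem Orthonormal.countable [TopologicalSpace.SeparableSpace E] (hv : Orthonormal 𝕜 v) :
    Countable ι := by
  refine Pairwise.countable_of_isOpen_disjoint (s := fun i => Metric.ball (v i) (1 / 2))
    (fun i j hij => Metric.ball_disjoint_ball ?_) (fun _ => Metric.isOpen_ball)
    (fun _ => Metric.nonempty_ball.2 one_half_pos)
  have := hv.norm_sub_sq hij
  rw [dist_eq_norm]
  nlinarith [norm_nonneg (v i - v j)]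
end

section
variable {E ι : Type*} [NormedAddCommGroup E] [InnerProductSpace ℝ E]

theorem HilbertBasis.hasSum_inner_sq (b : HilbertBasis ι ℝ E) (x : E) :
    HasSum (fun i => ⟪x, b i⟫ ^ 2) (‖x‖ ^ 2) := by
  simpa only [sq, real_inner_comm x, real_inner_self_eq_norm_mul_norm] using
    b.hasSum_inner_mul_inner x x
end

theorem hasSum_integral_of_nonneg_of_hasSum {α ι : Type*} [MeasurableSpace α] {μ : Measure α}
    [Countable ι] {F : ι → α → ℝ} {f : α → ℝ} (hF : ∀ i, Integrable (F i) μ)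
    (hF_nonneg : ∀ i, 0 ≤ᵐ[μ] F i) (hf : Integrable f μ)
    (h_lim : ∀ᵐ a ∂μ, HasSum (fun i => F i a) (f a)) :
    HasSum (fun i => ∫ a, F i a ∂μ) (∫ a, f a ∂μ) := by
  refine hasSum_integral_of_dominated_convergence F (fun i => (hF i).1)
    (fun i => (hF_nonneg i).mono fun a ha => (Real.norm_of_nonneg ha).le)
    (h_lim.mono fun a ha => ha.summable) (hf.congr ?_) h_lim
  filter_upwards [h_lim] with a ha using ha.tsum_eq.symm

theorem MeasureTheory.L2.inner_adjoint_comp_self_apply {α U : Type*} [MeasurableSpace α]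
    {μ : Measure α} [NormedAddCommGroup U] [InnerProductSpace ℝ U] [CompleteSpace U]
    (T : U →L[ℝ] Lp ℝ 2 μ) (u w : U) :
    ⟪(T.adjoint ∘L T) u, w⟫ = ∫ a, T u a * T w a ∂μ := by
  rw [ContinuousLinearMap.comp_apply, ContinuousLinearMap.adjoint_inner_left, L2.inner_def]
  simp only [RCLike.inner_apply, conj_trivial, mul_comm]

namespace MeasureTheory.Lp

variable {α U : Type*} [MeasurableSpace α] {μ : Measure α}
  [NormedAddCommGroup U] [InnerProductSpace ℝ U] {p : ENNReal} [Fact (1 ≤ p)]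

noncomputable def innerConstL (f : Lp U p μ) : U →L[ℝ] Lp ℝ p μ :=
  (ContinuousLinearMap.compLpL₂ p μ (innerSL ℝ)).flip f

theorem coeFn_innerConstL (f : Lp U p μ) (u : U) :
    innerConstL f u =ᵐ[μ] fun a => ⟪f a, u⟫ := by
  filter_upwards [((innerSL ℝ) u).coeFn_compLp f] with a ha
  rw [← real_inner_comm]
  exact ha

section Adjoint

variable [CompleteSpace U]

theorem inner_adjoint_comp_self_innerConstL_apply (f : Lp U 2 μ) (u w : U) :
    ⟪((innerConstL f).adjoint ∘L innerConstL f) u, w⟫ = ∫ a, ⟪f a, u⟫ * ⟪f a, w⟫ ∂μ := by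
  rw [L2.inner_adjoint_comp_self_apply]
  refine integral_congr_ae ?_
  filter_upwards [coeFn_innerConstL f u, coeFn_innerConstL f w] with a hu hw
  rw [hu, hw]

theorem hasSum_inner_adjoint_comp_self_innerConstL [TopologicalSpace.SeparableSpace U]
    {ι : Type*} (f : Lp U 2 μ) (b : HilbertBasis ι ℝ U) :
    HasSum (fun i => ⟪((innerConstL f).adjoint ∘L innerConstL f) (b i), b i⟫)
      (∫ a, ‖f a‖ ^ 2 ∂μ) := by
  have : Countable ι := b.orthonormal.countable
  simp only [inner_adjoint_comp_self_innerConstL_apply, ← sq]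
  exact hasSum_integral_of_nonneg_of_hasSum
    (fun i => ((Lp.memLp f).inner_const (b i)).integrable_sq)
    (fun i => Filter.Eventually.of_forall fun a => sq_nonneg _)
    (Lp.memLp f).norm.integrable_sq (Filter.Eventually.of_forall fun a => b.hasSum_inner_sq (f a))

end Adjoint

end MeasureTheory.Lp

theorem correlation_of_parametric_map_general
    {P : Type*} [MeasurableSpace P] (μ : Measure P)
    {U : Type*} [NormedAddCommGroup U] [InnerProductSpace ℝ U] [CompleteSpace U]
    [TopologicalSpace.SeparableSpace U]
    (r : P → U) (hmeas : StronglyMeasurable r)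
    (hL2 : Integrable (fun p => ‖r p‖ ^ 2) μ) :
    ∃ R : U →L[ℝ] Lp ℝ 2 μ,
      (∀ u : U, (R u : P → ℝ) =ᵐ[μ] fun p => ⟪r p, u⟫) ∧
      (∀ u w : U, ⟪(R.adjoint ∘L R) u, w⟫ = ∫ p, ⟪r p, u⟫ * ⟪r p, w⟫ ∂μ) ∧
      ∀ (ι : Type) (b : HilbertBasis ι ℝ U),
        HasSum (fun i => ⟪(R.adjoint ∘L R) (b i), b i⟫) (∫ p, ‖r p‖ ^ 2 ∂μ) := by
  have hr : MemLp r 2 μ := (memLp_two_iff_integrable_sq_norm hmeas.aestronglyMeasurable).2 hL2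
  have hr_ae := hr.coeFn_toLp
  refine ⟨Lp.innerConstL (hr.toLp r), fun u => ?_, fun u w => ?_, fun ι b => ?_⟩
  · filter_upwards [Lp.coeFn_innerConstL (hr.toLp r) u, hr_ae] with p hu hp
    rw [hu, hp]
  · rw [Lp.inner_adjoint_comp_self_innerConstL_apply]
    refine integral_congr_ae ?_
    filter_upwards [hr_ae] with p hp
    rw [hp]
  · convert Lp.hasSum_inner_adjoint_comp_self_innerConstL (hr.toLp r) b using 1
    refine integral_congr_ae ?_
    filter_upwards [hr_ae] with p hp
    rw [hp]

theorem correlation_of_parametric_map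
    {P : Type*} [MeasurableSpace P] (μ : Measure P) [IsFiniteMeasure μ]
    {U : Type*} [NormedAddCommGroup U] [InnerProductSpace ℝ U] [CompleteSpace U]
    [TopologicalSpace.SeparableSpace U]
    (r : P → U) (hmeas : StronglyMeasurable r)
    (hL2 : Integrable (fun p => ‖r p‖ ^ 2) μ) :
    ∃ R : U →L[ℝ] Lp ℝ 2 μ,
      (∀ u : U, (R u : P → ℝ) =ᵐ[μ] fun p => ⟪r p, u⟫) ∧
      (∀ u w : U, ⟪(R.adjoint ∘L R) u, w⟫ = ∫ p, ⟪r p, u⟫ * ⟪r p, w⟫ ∂μ) ∧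
      ∀ (ι : Type) (b : HilbertBasis ι ℝ U),
        HasSum (fun i => ⟪(R.adjoint ∘L R) (b i), b i⟫) (∫ p, ‖r p‖ ^ 2 ∂μ) :=
  correlation_of_parametric_map_general μ r hmeas hL2
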